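/- arXiv:2205.06857 — 4 statements merged into one kernel-verified Lean document; each statement's English description precedes it below -/
import Mathlib

section
/- In the depth-2 gerrymandering instance constructed from a Set Cover instance (U,F,t) in which every element belongs to exactly d ≥ 3 sets: if D is a set of vertices of G not containing the root r such that the induced subgraph G[D] is connected and the preferred candidate p wins D, then D = {w_i} for some i ∈ [d]. -/
attribute [local instance] Classical.propDecidable

/-- Candidate `c` *leads* district `D` (unweighted): `c`'s vote count is at least that of
every candidate. -/
def leadsIn {V C : Type*} (χ : V → C) (c : C) (D : Finset V) : Prop :=
  ∀ c' : C, (D.filter fun x => χ x = c').card ≤ (D.filter fun x => χ x = c).card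

/-- Candidate `c` *wins* district `D` (unweighted): `c`'s vote count strictly exceeds that of
every other candidate. -/
def winsIn {V C : Type*} (χ : V → C) (c : C) (D : Finset V) : Prop :=
  ∀ c' : C, c' ≠ c → (D.filter fun x => χ x = c').card < (D.filter fun x => χ x = c).card

/-- A district-partition of `G` into `k` districts: `k` pairwise-disjoint nonempty vertex sets
covering all vertices, each inducing a connected subgraph. -/
def IsDistrictPartition {V : Type*} (G : SimpleGraph V) (k : ℕ) (P : Finset (Finset V)) : Prop :=
  P.card = k ∧ (∀ D ∈ P, D.Nonempty) ∧
    (∀ D ∈ P, ∀ D' ∈ P, D ≠ D' → Disjoint D D') ∧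
    (∀ x : V, ∃ D ∈ P, x ∈ D) ∧
    (∀ D ∈ P, (G.induce (D : Set V)).Connected)

/-- A district-partition is *satisfying* for the preferred candidate `p` if `p` wins strictly
more districts than any other candidate leads. -/
def SatisfyingFor {V C : Type*} (χ : V → C) (p : C) (P : Finset (Finset V)) : Prop :=
  ∀ q : C, q ≠ p →
    (P.filter fun D => leadsIn χ q D).card < (P.filter fun D => winsIn χ p D).card

/-- Vertices of the depth-2 gerrymandering instance: the root `r`, weight-branch vertices
`w_i, w'_i` for `i ∈ [d]`, set-branch vertices `s_i, s'_i` for `i ∈ [m]`, and element leaves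
`v^j_l` for `j ∈ [n]`, `l ∈ [d]`. -/
inductive V2 (n m d : ℕ) : Type where
  | root
  | w (i : Fin d)
  | w' (i : Fin d)
  | s (i : Fin m)
  | s' (i : Fin m)
  | v (j : Fin n) (l : Fin d)
  deriving DecidableEq, Fintype

/-- Candidates of the depth-2 instance: preferred candidate `p`, adversary `q`,
element candidates `a_j`, and set candidates `b_i`. -/
inductive C2 (n m : ℕ) : Type where
  | p
  | q
  | a (j : Fin n)
  | b (i : Fin m)
  deriving DecidableEq

/-- Candidate preferences of the depth-2 instance. -/
def chi2 {n m d : ℕ} : V2 n m d → C2 n m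
  | .root => .p
  | .w _ => .p
  | .w' _ => .q
  | .s i => .b i
  | .s' i => .b i
  | .v j _ => .a j

/-- The depth-2 tree: the root is adjacent to each `w_i` and each `s_i`; `w'_i` is attached to
`w_i`; `s'_i` is attached to `s_i`; and the leaf `v^j_l` is attached to `s_{att j l}`, where
`att j` enumerates (bijectively) the sets containing element `e_j`. -/
def G2 {n m d : ℕ} (att : Fin n → Fin d → Fin m) : SimpleGraph (V2 n m d) :=
  SimpleGraph.fromRel (fun x y =>
    (x = V2.root ∧ ∃ i, y = V2.w i) ∨
    (∃ i, x = V2.w i ∧ y = V2.w' i) ∨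
    (x = V2.root ∧ ∃ i, y = V2.s i) ∨
    (∃ i, x = V2.s i ∧ y = V2.s' i) ∨
    (∃ j l, x = V2.s (att j l) ∧ y = V2.v j l))

/-! Outside the root, `p` is supported only by the `w_i`. Every neighbour of `w_i` other than
the root lies on its branch `{w_i, w'_i}`, so a connected district avoiding the root that contains
`w_i` stays inside that branch, and if it also contains `w'_i` then `q` ties `p`. -/

theorem SimpleGraph.Connected.subset_of_adj_closed {V : Type*} {G : SimpleGraph V} {D S : Set V}
    (hconn : (G.induce D).Connected) (hclosed : ∀ x ∈ D, x ∈ S → ∀ y ∈ D, G.Adj x y → y ∈ S)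
    {x : V} (hxD : x ∈ D) (hxS : x ∈ S) : D ⊆ S := by
  have walk_mem : ∀ {u v : D}, (G.induce D).Walk u v → (u : V) ∈ S → (v : V) ∈ S := by
    intro u v p
    induction p with
    | nil => exact id
    | cons h _ ih => exact fun hu => ih (hclosed _ (Subtype.prop _) hu _ (Subtype.prop _) h)
  intro y hyD
  obtain ⟨p⟩ := hconn.preconnected ⟨x, hxD⟩ ⟨y, hyD⟩
  exact walk_mem p hxS

section Voting

variable {V C : Type*} {χ : V → C} {c : C} {D : Finset V}

theorem winsIn.exists_mem [Nontrivial C] (hwin : winsIn χ c D) : ∃ x ∈ D, χ x = c := by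
  obtain ⟨c', hne⟩ := exists_ne c
  obtain ⟨x, hx⟩ := Finset.card_pos.mp (Nat.zero_lt_of_lt (hwin c' hne))
  exact ⟨x, Finset.mem_filter.mp hx⟩

theorem not_winsIn_pair [DecidableEq V] {a b : V} (hab : χ b ≠ χ a) :
    ¬ winsIn χ (χ a) {a, b} := by
  intro hwin
  have := hwin (χ b) hab
  simp [Finset.filter_insert, Finset.filter_singleton, hab, hab.symm] at this

end Voting

instance {n m : ℕ} : Nontrivial (C2 n m) := ⟨⟨.p, .q, nofun⟩⟩

section Depth2

variable {n m d : ℕ} {att : Fin n → Fin d → Fin m}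

theorem chi2_eq_p_iff {x : V2 n m d} : chi2 x = C2.p ↔ x = V2.root ∨ ∃ i, x = V2.w i := by
  cases x <;> simp [chi2]

theorem G2_adj_w {i : Fin d} {y : V2 n m d} :
    (G2 att).Adj (V2.w i) y ↔ y = V2.root ∨ y = V2.w' i := by
  cases y <;> simp [G2, eq_comm]

theorem G2_adj_w' {i : Fin d} {y : V2 n m d} : (G2 att).Adj (V2.w' i) y ↔ y = V2.w i := by
  cases y <;> simp [G2, eq_comm]

theorem subset_weight_branch_of_connected {D : Finset (V2 n m d)} (hroot : V2.root ∉ D)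
    (hconn : ((G2 att).induce (D : Set (V2 n m d))).Connected) {i : Fin d} (hw : V2.w i ∈ D) :
    D ⊆ {V2.w i, V2.w' i} := by
  have hclosed : ∀ x ∈ (D : Set (V2 n m d)), x ∈ ({V2.w i, V2.w' i} : Set (V2 n m d)) →
      ∀ y ∈ (D : Set (V2 n m d)), (G2 att).Adj x y → y ∈ ({V2.w i, V2.w' i} : Set _) := by
    rintro x - (rfl | rfl) y hyD hadj
    · rcases G2_adj_w.mp hadj with rfl | rfl
      · exact absurd hyD hroot
      · exact Or.inr rfl
    · exact Or.inl (G2_adj_w'.mp hadj)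
  intro y hy
  simpa using hconn.subset_of_adj_closed hclosed hw (Or.inl rfl) hy

theorem not_winsIn_weight_branch (i : Fin d) :
    ¬ winsIn chi2 C2.p ({V2.w i, V2.w' i} : Finset (V2 n m d)) :=
  not_winsIn_pair (χ := chi2) (a := V2.w i) (b := V2.w' i) nofun

end Depth2

theorem depth2_nonroot_p_district_general (n m d : ℕ)
    (att : Fin n → Fin d → Fin m)
    (D : Finset (V2 n m d))
    (hroot : V2.root ∉ D)
    (hconn : ((G2 att).induce (D : Set (V2 n m d))).Connected)
    (hwin : winsIn chi2 C2.p D) :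
    ∃ i : Fin d, D = {V2.w i} := by
  obtain ⟨x, hxD, hx⟩ := hwin.exists_mem
  obtain ⟨i, rfl⟩ : ∃ i, x = V2.w i :=
    (chi2_eq_p_iff.mp hx).resolve_left (ne_of_mem_of_not_mem hxD hroot)
  have hsub := subset_weight_branch_of_connected hroot hconn hxD
  refine ⟨i, ?_⟩
  by_cases hw' : V2.w' i ∈ D
  · have hD : D = {V2.w i, V2.w' i} := hsub.antisymm (Finset.insert_subset hxD (by simpa))
    exact absurd (hD ▸ hwin) (not_winsIn_weight_branch i)
  · have hsub' : D ⊆ {V2.w i} := fun y hy => by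
      simpa [ne_of_mem_of_not_mem hy hw'] using hsub hy
    exact (Finset.subset_singleton_iff.mp hsub').resolve_left (Finset.ne_empty_of_mem hxD)

/-- In the depth-2 gerrymandering instance constructed from a Set Cover
instance `(U, F, t)` in which every element belongs to exactly `d ≥ 3` sets: if `D` is a set
of vertices not containing the root `r` such that the induced subgraph `G[D]` is connected and
the preferred candidate `p` wins `D`, then `D = {w_i}` for some `i ∈ [d]`. -/
theorem depth2_nonroot_p_district (n m d t : ℕ) (hd : 3 ≤ d) (htm : t ≤ m)
    (S : Fin m → Finset (Fin n))
    (hfreq : ∀ j : Fin n, (Finset.univ.filter fun i => j ∈ S i).card = d)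
    (att : Fin n → Fin d → Fin m)
    (hattmem : ∀ j l, j ∈ S (att j l))
    (hattinj : ∀ j, Function.Injective (att j))
    (D : Finset (V2 n m d))
    (hroot : V2.root ∉ D)
    (hconn : ((G2 att).induce (D : Set (V2 n m d))).Connected)
    (hwin : winsIn chi2 C2.p D) :
    ∃ i : Fin d, D = {V2.w i} :=
  depth2_nonroot_p_district_general n m d att D hroot hconn hwin
end

section
/- Let (U,F,t) be a Set Cover instance in which every element belongs to exactly d ≥ 3 sets. If there exists X ⊆ F with |X| ≤ t and ∪_{S∈X} S = U, then the depth-2 gerrymandering instance constructed from (U,F,t) admits a district-partition into k = t+3 districts that is satisfying for the preferred candidate p. -/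
attribute [local instance] Classical.propDecidable

/-! Pad the cover to exactly `t` sets `X` and fix one weight branch `w₀ – w'₀`. The districts are
`{w₀}`, `{w'₀}`, for each `i ∈ X` the star of `s_i` (with `s'_i` and the leaves hanging from `s_i`),
and one district around the root containing everything else. In the root district `p` has `d`
votes against `d - 1` for `q`, at most `2` for any `b_i`, and at most `d - 1` for any `a_j`, because
`X` covers `e_j` and so one leaf of colour `a_j` sits in a star; hence `p` wins it as well as `{w₀}`.
Every other district has its own winner (`q` or the matching `b_i`), so each candidate other than
`p` leads at most one district. The districts are taken as the fibres of a labelling of the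
vertices, which makes disjointness and covering automatic. -/

open Finset

theorem SimpleGraph.induce_connected_of_radius_two {V : Type*} {G : SimpleGraph V} {s : Set V}
    {h : V} (hh : h ∈ s) (hs : ∀ x ∈ s, x = h ∨ G.Adj h x ∨ ∃ y ∈ s, G.Adj h y ∧ G.Adj y x) :
    (G.induce s).Connected := by
  have hreach : ∀ x (hx : x ∈ s), (G.induce s).Reachable ⟨h, hh⟩ ⟨x, hx⟩ := by
    intro x hx
    rcases hs x hx with rfl | hadj | ⟨y, hy, hhy, hyx⟩
    · rfl
    · exact (show (G.induce s).Adj ⟨h, hh⟩ ⟨x, hx⟩ from hadj).reachable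
    · exact (show (G.induce s).Adj ⟨h, hh⟩ ⟨y, hy⟩ from hhy).reachable.trans
        (show (G.induce s).Adj ⟨y, hy⟩ ⟨x, hx⟩ from hyx).reachable
  have : Nonempty s := ⟨⟨h, hh⟩⟩
  exact SimpleGraph.Connected.mk fun x y => (hreach x x.2).symm.trans (hreach y y.2)

noncomputable section Districting

variable {V C ι : Type*}

-- Going through `votes` keeps the (classical) decidability instance of `winsIn` and `leadsIn`,
-- which a filter written out over concrete types would not pick up.
def votes (χ : V → C) (c : C) (D : Finset V) : ℕ := #(D.filter fun x => χ x = c)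

variable {χ : V → C} {c q : C} {D : Finset V}

theorem leadsIn_of_winsIn (h : winsIn χ c D) : leadsIn χ c D := by
  intro c'
  by_cases hc' : c' = c
  · rw [hc']
  · exact (h c' hc').le

theorem leadsIn_iff_eq_of_winsIn (h : winsIn χ c D) : leadsIn χ q D ↔ q = c := by
  refine ⟨fun hq => ?_, fun hq => hq ▸ leadsIn_of_winsIn h⟩
  by_contra hne
  exact (h q hne).not_ge (hq c)

theorem winsIn_iff_eq_of_winsIn (h : winsIn χ c D) : winsIn χ q D ↔ q = c :=
  ⟨fun hq => (leadsIn_iff_eq_of_winsIn h).mp (leadsIn_of_winsIn hq), fun hq => hq ▸ h⟩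

theorem winsIn_singleton (v : V) : winsIn χ (χ v) {v} := by
  intro c' hc'
  simp [filter_singleton, Ne.symm hc']

theorem winsIn_iff_votes : winsIn χ c D ↔ ∀ c' ≠ c, votes χ c' D < votes χ c D := Iff.rfl

theorem votes_le_card {T : Finset V} (h : ∀ x ∈ D, χ x = c → x ∈ T) : votes χ c D ≤ #T :=
  card_le_card fun x hx => h x (mem_filter.mp hx).1 (mem_filter.mp hx).2

theorem votes_eq_card {T : Finset V} (h : ∀ x, x ∈ D ∧ χ x = c ↔ x ∈ T) : votes χ c D = #T :=
  congrArg card (ext fun x => by rw [mem_filter, h])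

theorem nonempty_of_induce_connected {G : SimpleGraph V} {s : Finset V}
    (h : (G.induce (s : Set V)).Connected) : s.Nonempty :=
  let ⟨⟨x, hx⟩⟩ := h.nonempty
  ⟨x, hx⟩

theorem satisfyingFor_image [DecidableEq V] [DecidableEq C] (p : C) (L : Finset ι)
    {D : ι → Finset V} (hD : Set.InjOn D L) (winner : ι → C)
    (hwin : ∀ ℓ ∈ L, winsIn χ (winner ℓ) (D ℓ))
    (hp : ∀ q ≠ p, #(L.filter (winner · = q)) < #(L.filter (winner · = p))) :
    SatisfyingFor χ p (L.image D) := by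
  intro q hq
  have hDf {r : ι → Prop} [DecidablePred r] : Set.InjOn D (L.filter r) :=
    hD.mono (coe_subset.mpr (filter_subset _ _))
  rw [filter_image, filter_image, card_image_of_injOn hDf, card_image_of_injOn hDf,
    filter_congr fun ℓ hℓ => leadsIn_iff_eq_of_winsIn (hwin ℓ hℓ),
    filter_congr fun ℓ hℓ => winsIn_iff_eq_of_winsIn (hwin ℓ hℓ)]
  simpa only [eq_comm] using hp q hq

variable [Fintype V]

def fiber (f : V → ι) (ℓ : ι) : Finset V := univ.filter fun x => f x = ℓ

@[simp]
theorem mem_fiber {f : V → ι} {ℓ : ι} {x : V} : x ∈ fiber f ℓ ↔ f x = ℓ := by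
  simp [fiber]

theorem injOn_fiber {f : V → ι} {L : Finset ι} (hne : ∀ ℓ ∈ L, (fiber f ℓ).Nonempty) :
    Set.InjOn (fiber f) L := by
  intro ℓ hℓ ℓ' _ h
  obtain ⟨x, hx⟩ := hne ℓ hℓ
  exact (mem_fiber.mp hx).symm.trans (mem_fiber.mp (h ▸ hx))

theorem isDistrictPartition_image_fiber [DecidableEq V] (G : SimpleGraph V) (f : V → ι)
    (L : Finset ι) (hf : ∀ x, f x ∈ L) (hconn : ∀ ℓ ∈ L, (G.induce (fiber f ℓ : Set V)).Connected) :
    IsDistrictPartition G #L (L.image (fiber f)) := by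
  have hne ℓ (hℓ : ℓ ∈ L) := nonempty_of_induce_connected (hconn ℓ hℓ)
  refine ⟨card_image_of_injOn (injOn_fiber hne), ?_, ?_, ?_, ?_⟩
  · simpa using hne
  · simp only [mem_image]
    rintro _ ⟨ℓ, -, rfl⟩ _ ⟨ℓ', -, rfl⟩ hne'
    refine disjoint_left.mpr fun x hx hx' => hne' ?_
    rw [← mem_fiber.mp hx, ← mem_fiber.mp hx']
  · exact fun x => ⟨fiber f (f x), mem_image_of_mem _ (hf x), mem_fiber.mpr rfl⟩
  · simpa using hconn

end Districting

namespace Depth2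

variable {n m d : ℕ} {att : Fin n → Fin d → Fin m}

@[simp] theorem adj_root_w (i : Fin d) : (G2 att).Adj V2.root (V2.w i) := by simp [G2]
@[simp] theorem adj_w_w' (i : Fin d) : (G2 att).Adj (V2.w i) (V2.w' i) := by simp [G2]
@[simp] theorem adj_root_s (i : Fin m) : (G2 att).Adj V2.root (V2.s i) := by simp [G2]
@[simp] theorem adj_s_s' (i : Fin m) : (G2 att).Adj (V2.s i) (V2.s' i) := by simp [G2]
@[simp] theorem adj_s_v (j : Fin n) (l : Fin d) : (G2 att).Adj (V2.s (att j l)) (V2.v j l) := by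
  simp [G2]

inductive Label (m : ℕ) : Type where
  | weight
  | weight'
  | main
  | set (i : Fin m)

variable (att) (X : Finset (Fin m)) (w0 : Fin d)

def district : V2 n m d → Label m
  | .root => .main
  | .w i => if i = w0 then .weight else .main
  | .w' i => if i = w0 then .weight' else .main
  | .s i | .s' i => if i ∈ X then .set i else .main
  | .v j l => if att j l ∈ X then .set (att j l) else .main

noncomputable def labels : Finset (Label m) :=
  {.weight, .weight', .main} ∪ X.image .set

def winner : Label m → C2 n m
  | .weight => .p
  | .weight' => .q
  | .main => .p
  | .set i => .b i

theorem card_labels : #(labels X) = #X + 3 := by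
  rw [labels, card_union_of_disjoint (by simp [disjoint_left]),
    card_image_of_injective _ fun _ _ => Label.set.inj, add_comm]
  simp

theorem district_mem_labels (x : V2 n m d) : district att X w0 x ∈ labels X := by
  cases x <;> simp only [district] <;> (try split_ifs) <;> simp [labels, *]

theorem fiber_weight : fiber (district att X w0) .weight = {.w w0} := by
  ext x; cases x <;> simp [district, ite_eq_iff]

theorem fiber_weight' : fiber (district att X w0) .weight' = {.w' w0} := by
  ext x; cases x <;> simp [district, ite_eq_iff]

variable {att X w0}

theorem winsIn_set (hattinj : ∀ j, Function.Injective (att j)) {i : Fin m} (hi : i ∈ X) :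
    winsIn chi2 (.b i) (fiber (district att X w0) (.set i)) := by
  have hb : votes chi2 (.b i) (fiber (district att X w0) (.set i)) = 2 := by
    rw [votes_eq_card (T := {.s i, .s' i}), card_pair (by simp)]
    intro x; cases x <;> simp [district, chi2, ite_eq_iff] <;> grind
  refine winsIn_iff_votes.mpr fun c hc => ?_
  rw [hb]
  rcases c with _ | _ | j | i'
  case a =>
    have hj : #((univ.filter (att j · = i)).image (V2.v j : Fin d → V2 n m d)) ≤ 1 :=
      card_image_le.trans (card_le_one.mpr fun l hl l' hl' =>
        hattinj j ((mem_filter.mp hl).2.trans (mem_filter.mp hl').2.symm))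
    refine (votes_le_card fun x hx hxj => ?_).trans_lt (hj.trans_lt one_lt_two)
    cases x <;> simp_all [district, chi2, ite_eq_iff]
  all_goals
    refine (votes_le_card (T := ∅) fun x hx hxc => ?_).trans_lt two_pos
    cases x <;> simp_all [district, chi2, ite_eq_iff]

theorem winsIn_main (hd : 3 ≤ d) (hcov : ∀ j, ∃ l, att j l ∈ X) :
    winsIn chi2 .p (fiber (district att X w0) .main) := by
  have hp : votes chi2 .p (fiber (district att X w0) .main) = d := by
    rw [votes_eq_card (T := insert .root ((univ.erase w0).image .w)),
      card_insert_of_notMem (by simp), card_image_of_injective _ fun _ _ => V2.w.inj,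
      card_erase_of_mem (mem_univ _), card_fin]
    · omega
    intro x; cases x <;> simp [district, chi2]
  refine winsIn_iff_votes.mpr fun c hc => ?_
  rw [hp]
  rcases c with _ | _ | j | i
  case p => exact absurd rfl hc
  case q =>
    refine (votes_le_card (T := (univ.erase w0).image .w') fun x hx hxq => ?_).trans_lt ?_
    · cases x <;> simp_all [district, chi2]
    · rw [card_image_of_injective _ fun _ _ => V2.w'.inj, card_erase_of_mem (mem_univ _),
        card_fin]
      omega
  case a =>
    obtain ⟨l, hl⟩ := hcov j
    refine (votes_le_card (T := (univ.erase l).image (.v j)) fun x hx hxj => ?_).trans_lt ?_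
    · cases x <;> simp_all [district, chi2]
      rintro rfl
      exact hx hl
    · refine card_image_le.trans_lt ?_
      rw [card_erase_of_mem (mem_univ _), card_fin]
      omega
  case b =>
    refine (votes_le_card (T := {.s i, .s' i}) fun x hx hxb => ?_).trans_lt ?_
    · cases x <;> simp_all [district, chi2]
    · exact card_le_two.trans_lt hd

theorem connected_fiber {ℓ : Label m} (hℓ : ℓ ∈ labels X) :
    ((G2 att).induce (fiber (district att X w0) ℓ : Set (V2 n m d))).Connected := by
  rcases ℓ with _ | _ | _ | i
  case weight =>
    rw [fiber_weight, coe_singleton]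
    exact SimpleGraph.induce_connected_of_radius_two rfl fun x hx => .inl hx
  case weight' =>
    rw [fiber_weight', coe_singleton]
    exact SimpleGraph.induce_connected_of_radius_two rfl fun x hx => .inl hx
  case main =>
    refine SimpleGraph.induce_connected_of_radius_two (h := .root) (by simp [district]) ?_
    intro x hx
    simp only [mem_coe, mem_fiber] at hx
    cases x with
    | root => exact .inl rfl
    | w i => exact .inr (.inl (adj_root_w i))
    | w' i => exact .inr (.inr ⟨.w i, by simpa [district] using hx, adj_root_w i, adj_w_w' i⟩)
    | s i => exact .inr (.inl (adj_root_s i))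
    | s' i => exact .inr (.inr ⟨.s i, by simpa [district] using hx, adj_root_s i, adj_s_s' i⟩)
    | v j l =>
      exact .inr (.inr ⟨.s (att j l), by simpa [district] using hx, adj_root_s _, adj_s_v j l⟩)
  case set =>
    have hi : i ∈ X := by simpa [labels] using hℓ
    refine SimpleGraph.induce_connected_of_radius_two (h := .s i) (by simp [district, hi]) ?_
    intro x hx
    cases x <;> simp [district, ite_eq_iff] at hx <;> obtain ⟨-, rfl⟩ := hx <;> simp

theorem winsIn_winner (hattinj : ∀ j, Function.Injective (att j)) (hd : 3 ≤ d)
    (hcov : ∀ j, ∃ l, att j l ∈ X) {ℓ : Label m} (hℓ : ℓ ∈ labels X) :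
    winsIn chi2 (winner ℓ) (fiber (district att X w0) ℓ) := by
  rcases ℓ with _ | _ | _ | i
  case weight => exact fiber_weight att X w0 ▸ winsIn_singleton (V2.w w0 : V2 n m d)
  case weight' => exact fiber_weight' att X w0 ▸ winsIn_singleton (V2.w' w0 : V2 n m d)
  case main => exact winsIn_main hd hcov
  case set => exact winsIn_set hattinj (by simpa [labels] using hℓ)

variable (X) in
theorem card_filter_winner_lt {c : C2 n m} (hc : c ≠ .p) :
    #((labels X).filter (winner · = c)) < #((labels X).filter (winner · = (.p : C2 n m))) := by
  have hc1 : #((labels X).filter (winner · = c)) ≤ 1 := by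
    refine card_le_one.mpr fun ℓ hℓ ℓ' hℓ' => ?_
    obtain ⟨-, rfl⟩ := mem_filter.mp hℓ
    have := (mem_filter.mp hℓ').2
    rcases ℓ with _ | _ | _ | i <;> rcases ℓ' with _ | _ | _ | i' <;> simp_all [winner]
  have hp2 : (labels X).filter (winner · = (.p : C2 n m)) = {.weight, .main} := by
    ext ℓ; rcases ℓ with _ | _ | _ | i <;> simp [labels, winner]
  rw [hp2, card_pair (by simp)]
  omega

theorem isDistrictPartition_districts :
    IsDistrictPartition (G2 att) (#X + 3) ((labels X).image (fiber (district att X w0))) :=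
  card_labels X ▸ isDistrictPartition_image_fiber _ _ _ (district_mem_labels att X w0)
    fun _ => connected_fiber

theorem satisfyingFor_districts (hattinj : ∀ j, Function.Injective (att j)) (hd : 3 ≤ d)
    (hcov : ∀ j, ∃ l, att j l ∈ X) :
    SatisfyingFor chi2 .p ((labels X).image (fiber (district att X w0))) :=
  satisfyingFor_image _ _ (injOn_fiber fun _ hℓ => nonempty_of_induce_connected
    (connected_fiber hℓ)) winner (fun _ => winsIn_winner hattinj hd hcov)
    fun _ => card_filter_winner_lt X

theorem exists_att_eq_of_mem {n m d : ℕ} {S : Fin m → Finset (Fin n)}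
    (hfreq : ∀ j : Fin n, (Finset.univ.filter fun i => j ∈ S i).card = d)
    {att : Fin n → Fin d → Fin m} (hattmem : ∀ j l, j ∈ S (att j l))
    (hattinj : ∀ j, Function.Injective (att j)) {i : Fin m} {j : Fin n} (hji : j ∈ S i) :
    ∃ l, att j l = i := by
  obtain ⟨l, -, hl⟩ := surjOn_of_injOn_of_card_le (s := univ) (att j)
    (fun l _ => mem_filter.mpr ⟨mem_univ _, hattmem j l⟩) (hattinj j).injOn
    (by rw [hfreq j, card_univ, Fintype.card_fin]) (mem_filter.mpr ⟨mem_univ i, hji⟩)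
  exact ⟨l, hl⟩

end Depth2

/-- forward direction of Theorem 1.  Let `(U, F, t)` be a Set Cover instance
in which every element belongs to exactly `d ≥ 3` sets.  If there exists `X ⊆ F` with
`|X| ≤ t` and `∪_{S ∈ X} S = U`, then the depth-2 gerrymandering instance constructed from
`(U, F, t)` admits a district-partition into `k = t + 3` districts that is satisfying for the
preferred candidate `p`. -/
theorem depth2_cover_imp_gerrymander (n m d t : ℕ) (hd : 3 ≤ d) (htm : t ≤ m)
    (S : Fin m → Finset (Fin n))
    (hfreq : ∀ j : Fin n, (Finset.univ.filter fun i => j ∈ S i).card = d)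
    (att : Fin n → Fin d → Fin m)
    (hattmem : ∀ j l, j ∈ S (att j l))
    (hattinj : ∀ j, Function.Injective (att j))
    (hcover : ∃ X : Finset (Fin m), X.card ≤ t ∧ ∀ j : Fin n, ∃ i ∈ X, j ∈ S i) :
    ∃ P : Finset (Finset (V2 n m d)),
      IsDistrictPartition (G2 att) (t + 3) P ∧ SatisfyingFor chi2 C2.p P := by
  obtain ⟨X₀, hX₀, hcover₀⟩ := hcover
  obtain ⟨X, hX₀X, rfl⟩ := exists_superset_card_eq hX₀ (by simpa using htm)
  have hcov : ∀ j, ∃ l, att j l ∈ X := fun j => by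
    obtain ⟨i, hi, hji⟩ := hcover₀ j
    obtain ⟨l, rfl⟩ := Depth2.exists_att_eq_of_mem hfreq hattmem hattinj hji
    exact ⟨l, hX₀X hi⟩
  exact ⟨_, Depth2.isDistrictPartition_districts (w0 := ⟨0, by omega⟩),
    Depth2.satisfyingFor_districts hattinj hd hcov⟩
end

section
/- In the subdivided-star gerrymandering instance constructed from a Set Cover instance (U,F,t): in any district-partition 𝒟 of G into k = t+4 districts that is satisfying for the preferred candidate p, the district of 𝒟 containing c_1 is the singleton {c_1} and the district containing c_2 is the singleton {c_2}. -/
/-!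
Only `c₁` and `c₂` vote for `p`, and a district won by `p` must contain one of them, so `p`
wins at most two of the `t + 4` districts. Hence some district is not won by `p` and is led by
another candidate, so a satisfying partition makes `p` win at least two districts: exactly two,
each containing exactly one of `c₁`, `c₂`. Such a district has no other voter, since any other
candidate present would have at least as many votes as `p`.
-/

attribute [local instance] Classical.propDecidable

/-- Vertices of the subdivided-star gerrymandering instance: the root `r`; branch 1 vertices
`c_1, c_2, u_1, …, u_n`; branch 2 vertices `w_1, …, w_{t-1}`; and, on each of the `t`
selection branches `s`, the initial vertices `v_0^1, …, v_0^n` (constructor `v0`), the group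
vertices `x_i` and `v_i^j` for `i ∈ [m]` (group `g_i`), and the final vertices
`y_0, …, y_m`. -/
inductive VS (n m t : ℕ) : Type where
  | root
  | c1
  | c2
  | u (j : Fin n)
  | w (i : Fin (t - 1))
  | v0 (s : Fin t) (j : Fin n)
  | x (s : Fin t) (i : Fin m)
  | v (s : Fin t) (i : Fin m) (j : Fin n)
  | y (s : Fin t) (i : Fin (m + 1))
  deriving DecidableEq, Fintype

/-- Candidates of the subdivided-star instance: the preferred candidate `p`, the ally `q`,
element candidates `a_j` for `j ∈ [n]`, and branch candidates `b_s` for `s ∈ [t]`. -/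
inductive CS (n t : ℕ) : Type where
  | p
  | q
  | a (j : Fin n)
  | b (s : Fin t)
  deriving DecidableEq

/-- Candidate preferences of the subdivided-star instance. -/
def chiS {n m t : ℕ} : VS n m t → CS n t
  | .root => .q
  | .c1 => .p
  | .c2 => .p
  | .u j => .a j
  | .w _ => .q
  | .v0 _ j => .a j
  | .x _ _ => .q
  | .v _ _ j => .a j
  | .y s _ => .b s

/-- Position of each non-root vertex along its branch, as a pair
(branch index, 0-based distance from the root along the branch minus one); the vertex at
position 0 of each branch is adjacent to the root.  Branch 0 is `c_1, c_2, u_1, …, u_n`;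
branch 1 is `w_1, …, w_{t-1}`; branch `2 + s` is selection branch `s`, ordered as
`v_0^1, …, v_0^n`, then groups `g_1, …, g_m` (group `g_i` consists of the vertices `v_i^j`
with `e_j ∉ S_i` in increasing order of `j`, then `x_i`, then the vertices `v_i^j` with
`e_j ∈ S_i` in increasing order of `j`), then `y_0, …, y_m`. -/
def posS {n m t : ℕ} (S : Fin m → Finset (Fin n)) : VS n m t → Option (ℕ × ℕ)
  | .root => none
  | .c1 => some (0, 0)
  | .c2 => some (0, 1)
  | .u j => some (0, 2 + (j : ℕ))
  | .w i => some (1, (i : ℕ))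
  | .v0 s j => some (2 + (s : ℕ), (j : ℕ))
  | .x s i => some (2 + (s : ℕ), n + (i : ℕ) * (n + 1) + (n - (S i).card))
  | .v s i j => some (2 + (s : ℕ), n + (i : ℕ) * (n + 1) +
      (if j ∈ S i then n - (S i).card + 1 + ((S i).filter fun j' => j' < j).card
       else ((S i)ᶜ.filter fun j' => j' < j).card))
  | .y s i => some (2 + (s : ℕ), n + m * (n + 1) + (i : ℕ))

/-- The subdivided star: the root is adjacent to the vertex at position 0 of each branch, and
vertices at consecutive positions of the same branch are adjacent. -/
def GS {n m t : ℕ} (S : Fin m → Finset (Fin n)) : SimpleGraph (VS n m t) :=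
  SimpleGraph.fromRel (fun a b =>
    (a = VS.root ∧ ∃ br, posS S b = some (br, 0)) ∨
    (∃ br k, posS S a = some (br, k) ∧ posS S b = some (br, k + 1)))

open Finset

section Voting

variable {V C : Type*} {χ : V → C} {p : C} {x : V} {D : Finset V} {P : Finset (Finset V)}

lemma exists_leadsIn (χ : V → C) (hD : D.Nonempty) : ∃ c, leadsIn χ c D := by
  obtain ⟨c, -, hmax⟩ :=
    exists_max_image (D.image χ) (fun c => #(D.filter fun x => χ x = c)) (hD.image χ)
  refine ⟨c, fun c' => ?_⟩
  by_cases hc' : c' ∈ D.image χ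
  · exact hmax c' hc'
  · rw [filter_false_of_mem fun x hx (hxc : χ x = c') => hc' (hxc ▸ mem_image_of_mem χ hx),
      card_empty]
    exact Nat.zero_le _

lemma exists_ne_leadsIn_of_not_winsIn (hD : D.Nonempty) (hnw : ¬ winsIn χ p D) :
    ∃ c ≠ p, leadsIn χ c D := by
  obtain ⟨c, hc⟩ := exists_leadsIn χ hD
  by_cases hcp : c = p
  · subst hcp
    simp only [winsIn, not_forall, not_lt] at hnw
    obtain ⟨c', hc'p, hc'⟩ := hnw
    exact ⟨c', hc'p, fun c'' => (hc c'').trans hc'⟩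
  · exact ⟨c, hcp, hc⟩

lemma exists_mem_of_winsIn (hD : D.Nonempty) (hw : winsIn χ p D) : ∃ x ∈ D, χ x = p := by
  by_contra! h
  obtain ⟨y, hy⟩ := hD
  have hlt := hw (χ y) (h y hy)
  rw [filter_false_of_mem h, card_empty] at hlt
  exact Nat.not_lt_zero _ hlt

lemma eq_singleton_of_winsIn (hw : winsIn χ p D) (hx : x ∈ D) (hxp : χ x = p)
    (huniq : ∀ y ∈ D, χ y = p → y = x) : D = {x} := by
  have hvotes : D.filter (fun y => χ y = p) = {x} :=
    eq_singleton_iff_unique_mem.2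
      ⟨mem_filter.2 ⟨hx, hxp⟩, fun y hy => huniq y (mem_filter.1 hy).1 (mem_filter.1 hy).2⟩
  refine eq_singleton_iff_unique_mem.2 ⟨hx, fun y hy => ?_⟩
  by_contra hyx
  have hlt := hw (χ y) fun h => hyx (huniq y hy h)
  rw [hvotes, card_singleton, Nat.lt_one_iff, card_eq_zero, filter_eq_empty_iff] at hlt
  exact hlt hy rfl

lemma one_lt_card_filter_winsIn (hsat : SatisfyingFor χ p P) (hDP : D ∈ P) (hD : D.Nonempty)
    (hnw : ¬ winsIn χ p D) : 1 < #(P.filter fun D => winsIn χ p D) := by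
  obtain ⟨c, hcp, hc⟩ := exists_ne_leadsIn_of_not_winsIn hD hnw
  have hled : 0 < #(P.filter fun D => leadsIn χ c D) := card_pos.2 ⟨D, mem_filter.2 ⟨hDP, hc⟩⟩
  exact lt_of_le_of_lt hled (hsat c hcp)

lemma eq_of_mem_of_mem_of_disjoint (hdisj : ∀ D ∈ P, ∀ D' ∈ P, D ≠ D' → Disjoint D D')
    {D' : Finset V} (hD : D ∈ P) (hD' : D' ∈ P) (hx : x ∈ D) (hx' : x ∈ D') : D = D' :=
  of_not_not fun h => disjoint_left.1 (hdisj D hD D' hD' h) hx hx'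

lemma exists_voter_injOn_winsIn [Nonempty V] (hne : ∀ D ∈ P, D.Nonempty)
    (hdisj : ∀ D ∈ P, ∀ D' ∈ P, D ≠ D' → Disjoint D D') :
    ∃ f : Finset V → V, (∀ D ∈ P.filter (fun D => winsIn χ p D), f D ∈ D ∧ χ (f D) = p) ∧
      Set.InjOn f (P.filter fun D => winsIn χ p D) := by
  choose! f hf using fun D (hD : D ∈ P.filter fun D => winsIn χ p D) =>
    exists_mem_of_winsIn (hne D (mem_filter.1 hD).1) (mem_filter.1 hD).2
  exact ⟨f, hf, fun D hD D' hD' hDD' => eq_of_mem_of_mem_of_disjoint hdisj (mem_filter.1 hD).1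
    (mem_filter.1 hD').1 (hf D hD).1 (hDD' ▸ (hf D' hD').1)⟩

lemma card_filter_winsIn_le [Fintype V] [DecidableEq C] (hne : ∀ D ∈ P, D.Nonempty)
    (hdisj : ∀ D ∈ P, ∀ D' ∈ P, D ≠ D' → Disjoint D D') :
    #(P.filter fun D => winsIn χ p D) ≤ #{x | χ x = p} := by
  obtain hW | ⟨D, hD⟩ := (P.filter fun D => winsIn χ p D).eq_empty_or_nonempty
  · exact hW ▸ Nat.zero_le _
  have : Nonempty V := ⟨(hne D (mem_filter.1 hD).1).choose⟩
  obtain ⟨f, hf, hinj⟩ := exists_voter_injOn_winsIn hne hdisj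
  exact card_le_card_of_injOn f (fun D hD => mem_filter.2 ⟨mem_univ _, (hf D hD).2⟩) hinj

lemma eq_singleton_of_card_le_card_filter_winsIn [Fintype V] [DecidableEq C]
    (hne : ∀ D ∈ P, D.Nonempty)
    (hdisj : ∀ D ∈ P, ∀ D' ∈ P, D ≠ D' → Disjoint D D')
    (hcard : #{x | χ x = p} ≤ #(P.filter fun D => winsIn χ p D))
    (hDP : D ∈ P) (hx : x ∈ D) (hxp : χ x = p) : D = {x} := by
  have : Nonempty V := ⟨x⟩
  obtain ⟨f, hf, hinj⟩ := exists_voter_injOn_winsIn hne hdisj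
  have hsurj := surjOn_of_injOn_of_card_le f
    (fun D hD => mem_filter.2 ⟨mem_univ _, (hf D hD).2⟩) hinj hcard
  have hdistrict : ∀ y ∈ D, χ y = p → D ∈ P.filter (fun D => winsIn χ p D) ∧ f D = y := by
    intro y hy hyp
    obtain ⟨D', hD', rfl⟩ := hsurj (mem_filter.2 ⟨mem_univ y, hyp⟩)
    obtain rfl := eq_of_mem_of_mem_of_disjoint hdisj (mem_filter.1 hD').1 hDP (hf D' hD').1 hy
    exact ⟨hD', rfl⟩
  obtain ⟨hDw, rfl⟩ := hdistrict x hx hxp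
  exact eq_singleton_of_winsIn (mem_filter.1 hDw).2 hx hxp fun y hy hyp =>
    (hdistrict y hy hyp).2.symm

end Voting

lemma filter_chiS_eq_p {n m t : ℕ} :
    ({x | chiS x = CS.p} : Finset (VS n m t)) = {VS.c1, VS.c2} := by
  ext x
  simp only [mem_filter, mem_univ, true_and, mem_insert, mem_singleton]
  cases x <;> simp [chiS]

theorem star_c1_c2_singletons_general (n m t : ℕ)
    (S : Fin m → Finset (Fin n))
    (P : Finset (Finset (VS n m t)))
    (hP : IsDistrictPartition (GS S) (t + 4) P)
    (hsat : SatisfyingFor chiS CS.p P) :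
    (∀ D ∈ P, VS.c1 ∈ D → D = {VS.c1}) ∧ (∀ D ∈ P, VS.c2 ∈ D → D = {VS.c2}) := by
  obtain ⟨hcard, hne, hdisj, -, -⟩ := hP
  have hvoters : #{x : VS n m t | chiS x = CS.p} = 2 := by
    rw [filter_chiS_eq_p, card_pair (by simp)]
  have hwon_le : #(P.filter fun D => winsIn chiS CS.p D) ≤ 2 :=
    hvoters ▸ card_filter_winsIn_le hne hdisj
  obtain ⟨D, hDP, hDw⟩ :=
    exists_mem_notMem_of_card_lt_card (hwon_le.trans_lt (by omega : 2 < #P))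
  have hwon : #{x : VS n m t | chiS x = CS.p} ≤ #(P.filter fun D => winsIn chiS CS.p D) :=
    hvoters ▸ one_lt_card_filter_winsIn hsat hDP (hne D hDP) fun hw => hDw (mem_filter.2 ⟨hDP, hw⟩)
  exact ⟨fun D hDP hc => eq_singleton_of_card_le_card_filter_winsIn hne hdisj hwon hDP hc rfl,
    fun D hDP hc => eq_singleton_of_card_le_card_filter_winsIn hne hdisj hwon hDP hc rfl⟩

/-- In the subdivided-star gerrymandering instance constructed from a Set
Cover instance `(U, F, t)`: in any district-partition `𝒟` of `G` into `k = t + 4` districts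
that is satisfying for the preferred candidate `p`, the district of `𝒟` containing `c_1` is
the singleton `{c_1}` and the district containing `c_2` is the singleton `{c_2}`. -/
theorem star_c1_c2_singletons (n m t : ℕ) (htm : t ≤ m)
    (S : Fin m → Finset (Fin n))
    (hcov : ∀ j : Fin n, ∃ i : Fin m, j ∈ S i)
    (P : Finset (Finset (VS n m t)))
    (hP : IsDistrictPartition (GS S) (t + 4) P)
    (hsat : SatisfyingFor chiS CS.p P) :
    (∀ D ∈ P, VS.c1 ∈ D → D = {VS.c1}) ∧ (∀ D ∈ P, VS.c2 ∈ D → D = {VS.c2}) :=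
  star_c1_c2_singletons_general n m t S P hP hsat
end

section
/- In the subdivided-star gerrymandering instance constructed from a Set Cover instance (U,F,t): in any district-partition 𝒟 of G in which {c_1} and {c_2} are singleton districts, for every j ∈ [n] the element candidate a_j leads the district of 𝒟 containing the vertex u_j. -/
/-!
The only neighbours of a vertex `u_j` are `c_2` and other `u`-vertices. Since `{c_2}` is a
district of its own, a connected district containing `u_j` consists of `u`-vertices only, and
these all vote for distinct candidates, so every candidate has at most one vote there while
`a_j` has one.
-/

attribute [local instance] Classical.propDecidable

theorem SimpleGraph.subset_of_induce_connected_of_adj_closed {V : Type*} {G : SimpleGraph V}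
    {D T : Set V} (hD : (G.induce D).Connected) {a : V} (haD : a ∈ D) (haT : a ∈ T)
    (hT : ∀ x ∈ D, x ∈ T → ∀ y ∈ D, G.Adj x y → y ∈ T) : D ⊆ T := by
  intro z hz
  obtain ⟨walk⟩ := hD.preconnected ⟨a, haD⟩ ⟨z, hz⟩
  suffices ∀ b c : D, (G.induce D).Walk b c → (b : V) ∈ T → (c : V) ∈ T from
    this _ _ walk haT
  intro b c walk
  induction walk with
  | nil => exact id
  | cons hadj _ ih => exact fun hb => ih (hT _ (Subtype.prop _) hb _ (Subtype.prop _) hadj)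

theorem leadsIn_of_injOn {V C : Type*} {χ : V → C} {D : Finset V} (hχ : Set.InjOn χ D)
    {v : V} (hv : v ∈ D) : leadsIn χ (χ v) D := by
  intro c'
  calc (D.filter fun x => χ x = c').card
      ≤ 1 := Finset.card_le_one.mpr fun x hx y hy => by
        rw [Finset.mem_filter] at hx hy
        exact hχ hx.1 hy.1 (hx.2.trans hy.2.symm)
    _ ≤ (D.filter fun x => χ x = χ v).card :=
        Finset.card_pos.mpr ⟨v, Finset.mem_filter.mpr ⟨hv, rfl⟩⟩

theorem chiS_injOn_range_u {n m t : ℕ} :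
    Set.InjOn (chiS : VS n m t → CS n t) (Set.range VS.u)
  | _, ⟨_, rfl⟩, _, ⟨_, rfl⟩, h => by cases h; rfl

theorem GS_adj_u {n m t : ℕ} (S : Fin m → Finset (Fin n)) {j : Fin n} {z : VS n m t}
    (h : (GS S).Adj (VS.u j) z) : z = VS.c2 ∨ z ∈ Set.range VS.u := by
  cases z <;> simp [GS, posS, Prod.ext_iff] at h ⊢ <;> omega

theorem star_element_candidates_lead_general (n m t : ℕ)
    (S : Fin m → Finset (Fin n))
    (k : ℕ) (P : Finset (Finset (VS n m t)))
    (hP : IsDistrictPartition (GS S) k P)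
    (hc2 : ({VS.c2} : Finset (VS n m t)) ∈ P) :
    ∀ j : Fin n, ∀ D ∈ P, VS.u j ∈ D → leadsIn chiS (CS.a j) D := by
  obtain ⟨-, -, hdisj, -, hconn⟩ := hP
  intro j D hD hu
  have hc2D : VS.c2 ∉ D := fun hc2D =>
    have hDc2 : D ≠ {VS.c2} := by rintro rfl; simp at hu
    Finset.disjoint_left.mp (hdisj D hD _ hc2 hDc2) hc2D (Finset.mem_singleton_self _)
  have hDu : (D : Set (VS n m t)) ⊆ Set.range VS.u :=
    SimpleGraph.subset_of_induce_connected_of_adj_closed (hconn D hD) hu ⟨j, rfl⟩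
      (by rintro _ - ⟨_, rfl⟩ y hy hxy
          exact (GS_adj_u S hxy).resolve_left fun h => hc2D (h ▸ hy))
  exact leadsIn_of_injOn (chiS_injOn_range_u.mono hDu) hu

/-- In the subdivided-star gerrymandering instance constructed from a Set
Cover instance `(U, F, t)`: in any district-partition `𝒟` of `G` in which `{c_1}` and `{c_2}`
are singleton districts, for every `j ∈ [n]` the element candidate `a_j` leads the district of
`𝒟` containing the vertex `u_j`. -/
theorem star_element_candidates_lead (n m t : ℕ) (htm : t ≤ m)
    (S : Fin m → Finset (Fin n))
    (hcov : ∀ j : Fin n, ∃ i : Fin m, j ∈ S i)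
    (k : ℕ) (P : Finset (Finset (VS n m t)))
    (hP : IsDistrictPartition (GS S) k P)
    (hc1 : ({VS.c1} : Finset (VS n m t)) ∈ P)
    (hc2 : ({VS.c2} : Finset (VS n m t)) ∈ P) :
    ∀ j : Fin n, ∀ D ∈ P, VS.u j ∈ D → leadsIn chiS (CS.a j) D :=
  star_element_candidates_lead_general n m t S k P hP hc2
end
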